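/- arXiv:2003.01453 — 2 statements merged into one kernel-verified Lean document; each statement's English description precedes it below -/
import Mathlib

section
/- Let H be an r×n integer matrix in Hermite normal form of rank r. If H is decomposable, then there exist a permutation matrix P (of size r) and a permutation matrix Q (of size n) such that Pᵀ H Q decomposes into a direct sum of matrices. Conversely, if such permutation matrices exist then H is decomposable. -/
open Matrix

/-- `M` is block-diagonal with a top-left `k × l` block and a complementary
bottom-right block: all entries outside these two blocks vanish. -/
def IsBlockSplit {m n : ℕ} (M : Matrix (Fin m) (Fin n) ℤ) (k l : ℕ) : Prop :=
  ∀ (i : Fin m) (j : Fin n),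
    (((i : ℕ) < k ∧ l ≤ (j : ℕ)) ∨ (k ≤ (i : ℕ) ∧ (j : ℕ) < l)) → M i j = 0

/-- An integer matrix is decomposable if, after multiplying by the inverse of a
unimodular matrix on the left and a permutation matrix on the right, it becomes
a nontrivial block-diagonal direct sum. -/
def Decomposable {m n : ℕ} (A : Matrix (Fin m) (Fin n) ℤ) : Prop :=
  ∃ (P : Matrix (Fin m) (Fin m) ℤ) (σ : Equiv.Perm (Fin n)) (k l : ℕ),
    IsUnit P.det ∧ 0 < k ∧ k < m ∧ 0 < l ∧ l < n ∧
      IsBlockSplit (P⁻¹ * A * σ.permMatrix ℤ) k l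

/-- A square integer matrix is reducible if conjugating by a permutation matrix
makes it a nontrivial block-diagonal direct sum of square matrices. -/
def Reducible {n : ℕ} (B : Matrix (Fin n) (Fin n) ℤ) : Prop :=
  ∃ (σ : Equiv.Perm (Fin n)) (s : ℕ), 0 < s ∧ s < n ∧
    IsBlockSplit ((σ.permMatrix ℤ)ᵀ * B * σ.permMatrix ℤ) s s

/-- Hermite normal form: row echelon with positive pivots strictly dominating the
nonnegative entries above them, and zero rows at the bottom. -/
def IsHermiteNormalForm {m n : ℕ} (H : Matrix (Fin m) (Fin n) ℤ) : Prop :=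
  ∃ (r : ℕ) (hr : r ≤ m) (piv : Fin r → Fin n),
    StrictMono piv ∧
    (∀ (i : Fin r) (j : Fin n), (j : ℕ) < (piv i : ℕ) → H (Fin.castLE hr i) j = 0) ∧
    (∀ i : Fin r, 0 < H (Fin.castLE hr i) (piv i)) ∧
    (∀ k i : Fin r, k < i →
      0 ≤ H (Fin.castLE hr k) (piv i) ∧
        H (Fin.castLE hr k) (piv i) < H (Fin.castLE hr i) (piv i)) ∧
    (∀ i : Fin m, r ≤ (i : ℕ) → ∀ j, H i j = 0)

/-- `H` is the Hermite normal form of `A`. -/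
def IsHNFOf {m n : ℕ} (H A : Matrix (Fin m) (Fin n) ℤ) : Prop :=
  IsHermiteNormalForm H ∧ ∃ P : Matrix (Fin m) (Fin m) ℤ, IsUnit P.det ∧ A = P * H

/-- Rank of an integer matrix, computed over `ℚ`. -/
noncomputable def rankQ {m n : ℕ} (A : Matrix (Fin m) (Fin n) ℤ) : ℕ :=
  (A.map (Int.cast : ℤ → ℚ)).rank

/-!
If `P⁻¹ H Q` is block diagonal, the row lattice `L` of `H`, which is also that of `P⁻¹ H`,
is the direct sum of its vectors supported on the column set `S` of the first block and those
supported on the complement. For a Hermite normal form this forces each row to lie entirely on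
the side of its pivot: the part of row `i` on the other side is a lattice vector vanishing at
`piv i`, whose leading entry would be a nonzero multiple of a pivot although it is nonnegative
and smaller than that pivot. Both sides contain pivots because the rows of `P⁻¹ H` are nonzero,
so sorting rows by the side of their pivot and columns by `S` gives the two permutations.
-/

open Submodule Function Finset

section SplitsAlong

variable {ι R : Type*}

/-- `L` is the direct sum of its vectors supported in `S` and those supported in `Sᶜ`. -/
def SplitsAlong [Semiring R] (L : Submodule R (ι → R)) (S : Set ι) : Prop :=
  ∀ v ∈ L, S.indicator v ∈ L

theorem SplitsAlong.compl [Ring R] {L : Submodule R (ι → R)} {S : Set ι}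
    (h : SplitsAlong L S) : SplitsAlong L Sᶜ := fun v hv => by
  rw [Set.indicator_compl]
  exact L.sub_mem hv (h v hv)

theorem splitsAlong_span [Semiring R] {κ : Type*} (g : κ → ι → R) (S : Set ι)
    (hg : ∀ a, support (g a) ⊆ S ∨ support (g a) ⊆ Sᶜ) :
    SplitsAlong (span R (Set.range g)) S := by
  intro v hv
  induction hv using span_induction with
  | mem _ hx =>
    obtain ⟨a, rfl⟩ := hx
    rcases hg a with h | h
    · rw [Set.indicator_eq_self.mpr h]
      exact subset_span ⟨a, rfl⟩
    · rw [Set.indicator_eq_zero'.mpr (Set.subset_compl_iff_disjoint_right.mp h)]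
      exact zero_mem _
  | zero => simp
  | add x y _ _ hx hy => rw [Set.indicator_add']; exact add_mem hx hy
  | smul c x _ hx =>
    change S.indicator (fun i => c • x i) ∈ _
    rw [Set.indicator_const_smul]
    exact smul_mem _ c hx

theorem support_subset_of_mem_span [Semiring R] {κ : Type*} {g : κ → ι → R} {T : Set ι}
    (hg : ∀ a, support (g a) ⊆ T) {v : ι → R} (hv : v ∈ span R (Set.range g)) :
    support v ⊆ T := by
  induction hv using span_induction with
  | mem _ hx => obtain ⟨a, rfl⟩ := hx; exact hg a
  | zero => simp
  | add x y _ _ hx hy => exact (support_add x y).trans (Set.union_subset hx hy)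
  | smul c x _ hx => exact (support_const_smul_subset c x).trans hx

end SplitsAlong

/-- A Hermite normal form without zero rows, with pivot columns `piv`. -/
structure IsHermiteEchelon {r n : ℕ} (H : Matrix (Fin r) (Fin n) ℤ) (piv : Fin r → Fin n) :
    Prop where
  strictMono : StrictMono piv
  eq_zero_of_lt_pivot : ∀ i j, j < piv i → H i j = 0
  pivot_pos : ∀ i, 0 < H i (piv i)
  nonneg_above_pivot : ∀ k i, k < i → 0 ≤ H k (piv i)
  lt_pivot_above_pivot : ∀ k i, k < i → H k (piv i) < H i (piv i)

theorem IsHermiteNormalForm.exists_isHermiteEchelon {r n : ℕ} {H : Matrix (Fin r) (Fin n) ℤ}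
    (hH : IsHermiteNormalForm H) (h0 : ∀ i, H i ≠ 0) : ∃ piv, IsHermiteEchelon H piv := by
  obtain ⟨r', hr', piv, hmono, hleft, hpos, hdom, hbot⟩ := hH
  obtain rfl : r' = r := hr'.eq_of_not_lt fun hlt => h0 ⟨r', hlt⟩ (funext (hbot _ le_rfl))
  exact ⟨piv, hmono, hleft, hpos, fun k i h => (hdom k i h).1, fun k i h => (hdom k i h).2⟩

namespace IsHermiteEchelon

variable {r n : ℕ} {H : Matrix (Fin r) (Fin n) ℤ} {piv : Fin r → Fin n}

/-- `a` is the first row involved in `c`; all later rows vanish left of their pivots. -/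
theorem exists_vecMul_apply_pivot (hH : IsHermiteEchelon H piv) {c : Fin r → ℤ} (hc : c ≠ 0) :
    ∃ a, c a ≠ 0 ∧ (c ᵥ* H) (piv a) = c a * H a (piv a) := by
  obtain ⟨a, hca, hmin⟩ := wellFounded_lt.has_min {b | c b ≠ 0} (Function.ne_iff.mp hc)
  refine ⟨a, hca, ?_⟩
  rw [vecMul, dotProduct, Finset.sum_eq_single a _ (by simp)]
  intro b _ hba
  by_cases hcb : c b = 0
  · rw [hcb, zero_mul]
  · have hab : a < b := (not_lt.mp (hmin b hcb)).lt_of_ne' hba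
    rw [hH.eq_zero_of_lt_pivot b _ (hH.strictMono hab), mul_zero]

theorem linearIndependent (hH : IsHermiteEchelon H piv) : LinearIndependent ℤ H.row := by
  rw [← vecMul_injective_iff, ← coe_vecMulLinear, injective_iff_map_eq_zero]
  intro c hc
  by_contra h
  obtain ⟨a, hca, hval⟩ := hH.exists_vecMul_apply_pivot h
  rw [vecMulLinear_apply] at hc
  rw [hc] at hval
  exact mul_ne_zero hca (hH.pivot_pos a).ne' hval.symm

theorem indicator_eq_zero_of_mem_span (hH : IsHermiteEchelon H piv) {T : Set (Fin n)}
    {i : Fin r} (hT : piv i ∉ T) (hmem : T.indicator (H i) ∈ span ℤ (Set.range H.row)) :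
    T.indicator (H i) = 0 := by
  rw [← range_vecMulLinear] at hmem
  obtain ⟨c, hc⟩ := hmem
  rw [vecMulLinear_apply] at hc
  by_contra hne
  have hc0 : c ≠ 0 := by
    rintro rfl
    exact hne (by rw [← hc, zero_vecMul])
  obtain ⟨a, hca, hval⟩ := hH.exists_vecMul_apply_pivot hc0
  have hp := hH.pivot_pos a
  rw [hc] at hval
  have hpivT : piv a ∈ T := by
    by_contra h
    rw [Set.indicator_of_notMem h] at hval
    exact mul_ne_zero hca hp.ne' hval.symm
  rw [Set.indicator_of_mem hpivT] at hval
  have hia : i < a := by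
    rcases lt_trichotomy i a with h | rfl | h
    · exact h
    · exact absurd hpivT hT
    · have := hH.eq_zero_of_lt_pivot i _ (hH.strictMono h)
      rw [hval] at this
      exact absurd this (mul_ne_zero hca hp.ne')
  have h1 := hH.nonneg_above_pivot i a hia
  have h2 := hH.lt_pivot_above_pivot i a hia
  rw [hval] at h1 h2
  -- `0 ≤ c a * p < p` for the pivot `p = H a (piv a) > 0` forces `c a = 0`
  rcases hca.lt_or_gt with h | h <;> nlinarith

theorem apply_eq_zero_of_splitsAlong (hH : IsHermiteEchelon H piv) {S : Set (Fin n)}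
    (hS : SplitsAlong (span ℤ (Set.range H.row)) S) {i : Fin r} {j : Fin n}
    (hij : piv i ∈ S ↔ j ∉ S) : H i j = 0 := by
  have hrow : H i ∈ span ℤ (Set.range H.row) := subset_span ⟨i, rfl⟩
  by_cases hj : j ∈ S
  · simpa [hj] using congrFun (hH.indicator_eq_zero_of_mem_span (by tauto) (hS _ hrow)) j
  · simpa [hj] using
      congrFun (hH.indicator_eq_zero_of_mem_span (T := Sᶜ) (by simpa using hij.mpr hj)
        (hS.compl _ hrow)) j

theorem exists_pivot_mem (hH : IsHermiteEchelon H piv) {S : Set (Fin n)}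
    (hS : SplitsAlong (span ℤ (Set.range H.row)) S) {v : Fin n → ℤ}
    (hv : v ∈ span ℤ (Set.range H.row)) (hvS : support v ⊆ S) (hv0 : v ≠ 0) :
    ∃ i, piv i ∈ S := by
  by_contra! h
  have hrows : ∀ i, support (H.row i) ⊆ Sᶜ := fun i j hj hjS =>
    hj (hH.apply_eq_zero_of_splitsAlong hS (by tauto))
  have hvSc := support_subset_of_mem_span hrows hv
  exact hv0 (support_eq_empty_iff.mp (Set.subset_empty_iff.mp fun j hj => hvSc hj (hvS hj)))

end IsHermiteEchelon

section Permutation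

theorem exists_perm_mem_iff_lt_card {n : ℕ} (s : Finset (Fin n)) :
    ∃ σ : Equiv.Perm (Fin n), ∀ j, j ∈ s ↔ (σ j : ℕ) < #s := by
  have hcard : #s + Fintype.card {j // j ∉ s} = n := by
    rw [← Fintype.card_coe s, ← Fintype.card_sum, Fintype.card_congr (Equiv.sumCompl _),
      Fintype.card_fin]
  refine ⟨(Equiv.sumCompl (· ∈ s)).symm.trans <| (Equiv.sumCongr s.equivFin
    (Fintype.equivFin _)).trans <| finSumFinEquiv.trans (finCongr hcard), fun j => ?_⟩
  by_cases hj : j ∈ s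
  · simp [hj, Equiv.sumCompl_symm_apply_of_pos]
  · simp [hj, Equiv.sumCompl_symm_apply_of_neg]

variable {m n R : Type*} [Fintype m] [Fintype n] [DecidableEq m] [DecidableEq n]

theorem transpose_permMatrix_mul_mul_permMatrix_apply [NonAssocSemiring R]
    (σ : Equiv.Perm m) (τ : Equiv.Perm n) (M : Matrix m n R) (i : m) (j : n) :
    ((σ.permMatrix R)ᵀ * M * τ.permMatrix R) i j = M (σ.symm i) (τ.symm j) := by
  rw [transpose_permMatrix, PEquiv.toMatrix_toPEquiv_mul, PEquiv.mul_toMatrix_toPEquiv]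
  rfl

theorem inv_permMatrix [CommRing R] (σ : Equiv.Perm n) :
    (σ.permMatrix R)⁻¹ = (σ.permMatrix R)ᵀ := by
  refine inv_eq_left_inv ?_
  rw [transpose_permMatrix, ← permMatrix_mul, mul_inv_cancel, permMatrix_one]

end Permutation

theorem exists_perm_isBlockSplit {m n : ℕ} (M : Matrix (Fin m) (Fin n) ℤ)
    (T : Finset (Fin m)) (S : Finset (Fin n)) (hM : ∀ i j, (i ∈ T ↔ j ∉ S) → M i j = 0) :
    ∃ (σ : Equiv.Perm (Fin m)) (τ : Equiv.Perm (Fin n)),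
      IsBlockSplit ((σ.permMatrix ℤ)ᵀ * M * τ.permMatrix ℤ) #T #S := by
  obtain ⟨σ, hσ⟩ := exists_perm_mem_iff_lt_card T
  obtain ⟨τ, hτ⟩ := exists_perm_mem_iff_lt_card S
  refine ⟨σ, τ, fun i j hij => ?_⟩
  rw [transpose_permMatrix_mul_mul_permMatrix_apply]
  apply hM
  rw [hσ, hτ, Equiv.apply_symm_apply, Equiv.apply_symm_apply]
  omega

theorem span_range_row_mul_of_isUnit {m n R : Type*} [Fintype m] [DecidableEq m] [CommRing R]
    {A : Matrix m m R} (hA : IsUnit A) (B : Matrix m n R) :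
    span R (Set.range (A * B).row) = span R (Set.range B.row) := by
  have hsurj : LinearMap.range A.vecMulLinear = ⊤ :=
    LinearMap.range_eq_top.mpr (vecMul_surjective_iff_isUnit.mpr hA)
  rw [← range_vecMulLinear, ← range_vecMulLinear,
    ← LinearMap.range_comp_of_range_eq_top B.vecMulLinear hsurj]
  congr 1
  exact LinearMap.ext fun x => (vecMul_vecMul x A B).symm

theorem Decomposable.exists_splitsAlong {m n : ℕ} {A : Matrix (Fin m) (Fin n) ℤ}
    (hA : LinearIndependent ℤ A.row) (hdec : Decomposable A) :
    ∃ S : Finset (Fin n), SplitsAlong (span ℤ (Set.range A.row)) S ∧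
      (∃ v ∈ span ℤ (Set.range A.row), support v ⊆ S ∧ v ≠ 0) ∧
      (∃ w ∈ span ℤ (Set.range A.row), support w ⊆ (↑S)ᶜ ∧ w ≠ 0) := by
  obtain ⟨P, σ, k, l, hP, hk, hkm, -, -, hblock⟩ := hdec
  have hPinv : IsUnit P⁻¹ := (isUnit_iff_isUnit_det _).mpr (isUnit_nonsing_inv_det P hP)
  set G := P⁻¹ * A
  have hspan : span ℤ (Set.range G.row) = span ℤ (Set.range A.row) :=
    span_range_row_mul_of_isUnit hPinv A
  have hG : LinearIndependent ℤ G.row := by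
    rw [← vecMul_injective_iff] at hA ⊢
    have := hA.comp (vecMul_injective_of_isUnit hPinv)
    simpa only [comp_def, vecMul_vecMul] using this
  have hGσ : ∀ a j, G a j = (G * σ.permMatrix ℤ) a (σ j) := by
    intro a j
    rw [PEquiv.mul_toMatrix_toPEquiv]
    simp
  let S : Finset (Fin n) := {j | (σ j : ℕ) < l}
  have hlow : ∀ a : Fin m, (a : ℕ) < k → support (G a) ⊆ S := fun a ha j hj => by
    by_contra hjS
    exact hj ((hGσ a j).trans (hblock a (σ j) (Or.inl ⟨ha, by simpa [S] using hjS⟩)))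
  have hhigh : ∀ a : Fin m, k ≤ (a : ℕ) → support (G a) ⊆ (↑S)ᶜ :=
    fun a ha j hj hjS =>
      hj ((hGσ a j).trans (hblock a (σ j) (Or.inr ⟨ha, by simpa [S] using hjS⟩)))
  have hsplit : SplitsAlong (span ℤ (Set.range G.row)) S :=
    splitsAlong_span G.row S fun a => (lt_or_ge (a : ℕ) k).imp (hlow a) (hhigh a)
  rw [← hspan]
  exact ⟨S, hsplit,
    ⟨G ⟨0, by omega⟩, subset_span (Set.mem_range_self _), hlow _ hk, hG.ne_zero _⟩,
    ⟨G ⟨k, hkm⟩, subset_span (Set.mem_range_self _), hhigh _ le_rfl, hG.ne_zero _⟩⟩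

theorem row_ne_zero_of_rankQ_eq {m n : ℕ} {A : Matrix (Fin m) (Fin n) ℤ} (hA : rankQ A = m)
    (i : Fin m) : A i ≠ 0 := by
  have hli : LinearIndependent ℚ (A.map (Int.cast : ℤ → ℚ)).row := by
    rw [linearIndependent_iff_card_eq_finrank_span, Set.finrank, ← rank_eq_finrank_span_row,
      Fintype.card_fin]
    exact hA.symm
  intro h
  exact hli.ne_zero i (funext fun j => by simp [row, congrFun h j])

/-- an `r × n` matrix in Hermite normal form of rank `r` is decomposable
iff it decomposes via permutation matrices on both sides. -/
theorem hnf_decomposable_iff_perm_decomposable {r n : ℕ}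
    (H : Matrix (Fin r) (Fin n) ℤ)
    (hHNF : IsHermiteNormalForm H) (hrank : rankQ H = r) :
    Decomposable H ↔
      ∃ (σ : Equiv.Perm (Fin r)) (τ : Equiv.Perm (Fin n)) (k l : ℕ),
        0 < k ∧ k < r ∧ 0 < l ∧ l < n ∧
          IsBlockSplit ((σ.permMatrix ℤ)ᵀ * H * τ.permMatrix ℤ) k l := by
  obtain ⟨piv, hH⟩ := hHNF.exists_isHermiteEchelon (row_ne_zero_of_rankQ_eq hrank)
  constructor
  · intro hdec
    obtain ⟨S, hsplit, ⟨v, hv, hvS, hv0⟩, ⟨w, hw, hwS, hw0⟩⟩ :=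
      hdec.exists_splitsAlong hH.linearIndependent
    obtain ⟨i₁, hi₁⟩ := hH.exists_pivot_mem hsplit hv hvS hv0
    obtain ⟨i₂, hi₂⟩ := hH.exists_pivot_mem hsplit.compl hw hwS hw0
    obtain ⟨σ, τ, hblock⟩ := exists_perm_isBlockSplit H {i | piv i ∈ S} S
      fun i j hij => hH.apply_eq_zero_of_splitsAlong hsplit (by simpa using hij)
    refine ⟨σ, τ, _, _, card_pos.mpr ⟨i₁, by simpa using hi₁⟩, ?_,
      card_pos.mpr ⟨piv i₁, hi₁⟩, ?_, hblock⟩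
    · simpa using card_lt_univ_of_notMem (s := {i | piv i ∈ S}) (by simpa using hi₂)
    · simpa using card_lt_univ_of_notMem (s := S) (by simpa using hi₂)
  · rintro ⟨σ, τ, k, l, hk, hkr, hl, hln, hblock⟩
    exact ⟨σ.permMatrix ℤ, τ, k, l, by simp, hk, hkr, hl, hln, by rwa [inv_permMatrix]⟩
end

section
/- Let H be an r×n integer matrix of rank r in Hermite normal form with no zero column. If HᵀH is reducible, then H is decomposable: there exist a permutation of the columns and a permutation of the rows of H after which H is a nontrivial block-diagonal direct sum. -/
open Matrix

lemma exists_sorting_perm {n : ℕ} (p : Fin n → Prop) [DecidablePred p] :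
    ∃ π : Equiv.Perm (Fin n), ∀ j : Fin n,
      p (π j) ↔ (j : ℕ) < Fintype.card {x // p x} := by
  set l := Fintype.card {x // p x} with hl
  have hln : l ≤ n := by simpa using Fintype.card_subtype_le p
  have hc : Fintype.card {x // ¬ p x} = n - l := by
    rw [Fintype.card_subtype_compl]; simp [hl]
  let e₁ : Fin l ≃ {x // p x} := (Fintype.equivFinOfCardEq rfl).symm
  let e₂ : Fin (n - l) ≃ {x // ¬ p x} := (Fintype.equivFinOfCardEq hc).symm
  let g : Fin n ≃ Fin (l + (n - l)) := finCongr (by omega)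
  refine ⟨(g.trans (finSumFinEquiv.symm.trans ((e₁.sumCongr e₂).trans
      (Equiv.sumCompl p)))), fun j => ?_⟩
  simp only [Equiv.trans_apply]
  have hg : (g j : ℕ) = (j : ℕ) := by simp [g, finCongr_apply]
  rcases h : finSumFinEquiv.symm (g j) with a | a
  · have h2 : g j = finSumFinEquiv (Sum.inl a) := by
      rw [← h, Equiv.apply_symm_apply]
    have hj : (j : ℕ) < l := by
      rw [finSumFinEquiv_apply_left] at h2
      have := congrArg (Fin.val) h2
      simp at this; omega
    simp only [h, Equiv.sumCongr_apply, Sum.map_inl, Equiv.sumCompl_apply_inl]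
    exact iff_of_true (e₁ a).2 hj
  · have h2 : g j = finSumFinEquiv (Sum.inr a) := by
      rw [← h, Equiv.apply_symm_apply]
    have hj : ¬ ((j : ℕ) < l) := by
      rw [finSumFinEquiv_apply_right] at h2
      have := congrArg (Fin.val) h2
      simp [Fin.natAdd] at this; omega
    simp only [h, Equiv.sumCongr_apply, Sum.map_inr, Equiv.sumCompl_apply_inr]
    exact iff_of_false (e₂ a).2 hj

lemma perm_conj_entry {m n : ℕ} (A : Matrix (Fin m) (Fin n) ℤ)
    (ρ : Equiv.Perm (Fin m)) (τ : Equiv.Perm (Fin n)) (i : Fin m) (j : Fin n) :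
    ((ρ.permMatrix ℤ)ᵀ * A * τ.permMatrix ℤ) i j = A (ρ⁻¹ i) (τ⁻¹ j) := by
  have h1 : (ρ.permMatrix ℤ)ᵀ = (ρ⁻¹).permMatrix ℤ := by
    rw [Equiv.Perm.permMatrix, Equiv.Perm.permMatrix, ← PEquiv.toMatrix_symm,
      ← Equiv.toPEquiv_symm]
    rfl
  rw [h1, Equiv.Perm.permMatrix, Equiv.Perm.permMatrix,
    PEquiv.toMatrix_toPEquiv_mul, PEquiv.mul_toMatrix_toPEquiv]
  rfl

/-- if `H` is in Hermite normal form of rank `r` with no zero column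
and `HᵀH` is reducible, then `H` is decomposable via row and column permutations. -/
theorem decomposable_of_gram_reducible {r n : ℕ}
    (H : Matrix (Fin r) (Fin n) ℤ)
    (hHNF : IsHermiteNormalForm H) (hrank : rankQ H = r)
    (hcol : ∀ j, ∃ i, H i j ≠ 0) (hred : Reducible (Hᵀ * H)) :
    ∃ (σ : Equiv.Perm (Fin r)) (τ : Equiv.Perm (Fin n)) (k l : ℕ),
      0 < k ∧ k < r ∧ 0 < l ∧ l < n ∧
        IsBlockSplit ((σ.permMatrix ℤ)ᵀ * H * τ.permMatrix ℤ) k l := by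
  obtain ⟨r', hr', piv, hmono, hleft, hpos, -, hzero⟩ := hHNF
  obtain ⟨σ, s, hs0, hsn, hB⟩ := hred
  set c : Fin n → Prop := fun j => (σ j : ℕ) < s with hcdef
  haveI : DecidablePred c := Classical.decPred c
  -- cross-class columns are orthogonal
  have orth : ∀ a b : Fin n, c a → ¬ c b → (∑ t, H t a * H t b) = 0 := by
    intro a b ha hb
    have h0 := hB (σ a) (σ b) (Or.inl ⟨ha, le_of_not_gt hb⟩)
    rw [perm_conj_entry] at h0
    simpa [Matrix.mul_apply, Matrix.transpose_apply] using h0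
  -- rows beyond r' are zero; nonzero entries force i < r'
  have rownz : ∀ (i : Fin r) (j : Fin n), H i j ≠ 0 → (i : ℕ) < r' := by
    intro i j hij
    by_contra hge
    exact hij (hzero i (le_of_not_gt hge) j)
  -- Claim A: every nonzero entry's column has the class of the row's pivot
  have claimA : ∀ N : ℕ, ∀ i : Fin r', (i : ℕ) < N → ∀ j : Fin n,
      H (Fin.castLE hr' i) j ≠ 0 → (c j ↔ c (piv i)) := by
    intro N
    induction N with
    | zero => intro i hi; omega
    | succ N ih =>
      intro i hi j hj
      by_contra hiff
      have horth : ∑ t, H t (piv i) * H t j = 0 := by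
        by_cases hcj : c j
        · have hcp : ¬ c (piv i) := fun h => hiff (iff_of_true hcj h)
          have h0 := orth j (piv i) hcj hcp
          calc ∑ t, H t (piv i) * H t j = ∑ t, H t j * H t (piv i) := by
                exact Finset.sum_congr rfl fun t _ => mul_comm _ _
            _ = 0 := h0
        · have hcp : c (piv i) := by
            by_contra h; exact hiff (iff_of_false hcj h)
          exact orth (piv i) j hcp hcj
      have hupperzero : ∀ t : Fin r, (i : ℕ) < (t : ℕ) → H t (piv i) = 0 := by
        intro t ht
        by_cases htr : (t : ℕ) < r'
        · have hlt : piv i < piv ⟨(t : ℕ), htr⟩ := hmono (show i < ⟨(t : ℕ), htr⟩ from ht)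
          have h0 := hleft ⟨(t : ℕ), htr⟩ (piv i) hlt
          rwa [show Fin.castLE hr' ⟨(t : ℕ), htr⟩ = t from Fin.ext rfl] at h0
        · exact hzero t (le_of_not_gt htr) _
      have key : ∃ t : Fin r, (t : ℕ) < (i : ℕ) ∧ H t (piv i) ≠ 0 ∧ H t j ≠ 0 := by
        by_contra hk
        push_neg at hk
        have hsum : ∑ t, H t (piv i) * H t j
            = H (Fin.castLE hr' i) (piv i) * H (Fin.castLE hr' i) j := by
          apply Finset.sum_eq_single
          · intro t _ hne
            rcases lt_trichotomy (t : ℕ) (i : ℕ) with h | h | h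
            · rcases eq_or_ne (H t (piv i)) 0 with h0 | h0
              · rw [h0, zero_mul]
              · rw [hk t h h0, mul_zero]
            · exact absurd (Fin.ext (by simpa using h)) hne
            · rw [hupperzero t h, zero_mul]
          · intro h; exact absurd (Finset.mem_univ _) h
        rw [horth] at hsum
        exact mul_ne_zero (ne_of_gt (hpos i)) hj hsum.symm
      obtain ⟨t, hti, ht1, ht2⟩ := key
      have htr : (t : ℕ) < r' := by have := i.2; omega
      have hcast : Fin.castLE hr' ⟨(t : ℕ), htr⟩ = t := Fin.ext rfl
      have ih1 := ih ⟨(t : ℕ), htr⟩ (show (t : ℕ) < N by omega) (piv i) (by rw [hcast]; exact ht1)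
      have ih2 := ih ⟨(t : ℕ), htr⟩ (show (t : ℕ) < N by omega) j (by rw [hcast]; exact ht2)
      exact hiff (ih2.trans ih1.symm)
  have cA : ∀ i : Fin r', ∀ j : Fin n, H (Fin.castLE hr' i) j ≠ 0 →
      (c j ↔ c (piv i)) := fun i => claimA r' i i.2
  -- row classes
  set d : Fin r → Prop :=
    fun i => if h : (i : ℕ) < r' then c (piv ⟨(i : ℕ), h⟩) else True with hddef
  haveI : DecidablePred d := Classical.decPred d
  have hd_pos : ∀ (i : Fin r) (h : (i : ℕ) < r'), d i ↔ c (piv ⟨(i : ℕ), h⟩) := by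
    intro i h; rw [hddef]; simp only [dif_pos h]
  set k := Fintype.card {x // d x} with hkdef
  set l := Fintype.card {x // c x} with hldef
  -- witnesses
  have hj0 : c (σ.symm ⟨0, by omega⟩) := by
    simp only [hcdef, Equiv.apply_symm_apply]; exact hs0
  have hj1 : ¬ c (σ.symm ⟨s, hsn⟩) := by
    simp only [hcdef, Equiv.apply_symm_apply]; exact lt_irrefl s
  have hl0 : 0 < l := Fintype.card_pos_iff.2 ⟨⟨_, hj0⟩⟩
  have hln : l < n := by
    have := Fintype.card_subtype_lt (p := c) (x := σ.symm ⟨s, hsn⟩) hj1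
    simpa using this
  have hrowc : ∀ j : Fin n, ∃ i : Fin r, ∃ hir : (i : ℕ) < r',
      (c j ↔ c (piv ⟨(i : ℕ), hir⟩)) := by
    intro j
    obtain ⟨i, hi⟩ := hcol j
    have hir : (i : ℕ) < r' := rownz i j hi
    refine ⟨i, hir, cA ⟨(i : ℕ), hir⟩ j ?_⟩
    rwa [show Fin.castLE hr' ⟨(i : ℕ), hir⟩ = i from Fin.ext rfl]
  have hk0 : 0 < k := by
    obtain ⟨i, hir, hiff⟩ := hrowc (σ.symm ⟨0, by omega⟩)
    exact Fintype.card_pos_iff.2 ⟨⟨i, (hd_pos i hir).2 (hiff.1 hj0)⟩⟩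
  have hkr : k < r := by
    obtain ⟨i, hir, hiff⟩ := hrowc (σ.symm ⟨s, hsn⟩)
    have hnd : ¬ d i := fun hd => hj1 (hiff.2 ((hd_pos i hir).1 hd))
    have := Fintype.card_subtype_lt (p := d) (x := i) hnd
    simpa using this
  obtain ⟨πr, hπr⟩ := exists_sorting_perm d
  obtain ⟨πc, hπc⟩ := exists_sorting_perm c
  refine ⟨πr⁻¹, πc⁻¹, k, l, hk0, hkr, hl0, hln, ?_⟩
  intro i j hij
  rw [perm_conj_entry]
  simp only [inv_inv]
  rcases hij with ⟨hik, hjl⟩ | ⟨hik, hjl⟩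
  · have hda : d (πr i) := (hπr i).2 hik
    have hcb : ¬ c (πc j) := fun hcb => by have := (hπc j).1 hcb; omega
    by_contra hne
    have har : (πr i : ℕ) < r' := rownz _ _ hne
    have hiff := cA ⟨(πr i : ℕ), har⟩ (πc j) (by
      rwa [show Fin.castLE hr' ⟨(πr i : ℕ), har⟩ = πr i from Fin.ext rfl])
    exact hcb (hiff.2 ((hd_pos (πr i) har).1 hda))
  · have hda : ¬ d (πr i) := fun hda => by have := (hπr i).1 hda; omega
    have hcb : c (πc j) := (hπc j).2 hjl
    by_contra hne
    have har : (πr i : ℕ) < r' := rownz _ _ hne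
    have hiff := cA ⟨(πr i : ℕ), har⟩ (πc j) (by
      rwa [show Fin.castLE hr' ⟨(πr i : ℕ), har⟩ = πr i from Fin.ext rfl])
    exact hda ((hd_pos (πr i) har).2 (hiff.1 hcb))
end
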